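/- arXiv:math/0407448 — 3 statements merged into one kernel-verified Lean document; each statement's English description precedes it below -/
import Mathlib

section
/- Let r and s be integers with r > s > 0, let ε ∈ {0,1}, and let δ ∈ {1,−1}. Let p be a real polynomial of degree at most r and q a real polynomial of degree at most s−1+ε, and define g : (0,1) → ℝ by g(t) = p(t²) + t^{δ}(1−t²)^{r−s} q(t²). If g vanishes at r+s+1+ε distinct points of (0,1), then p is the zero polynomial and q is the zero polynomial (so g ≡ 0 on (0,1)). -/
/-!
Put `x = t²` and `e = δ/2`, so that `g(t) = p(x) + x^e Q(x)` with `Q = (1 - x)^(r-s) q`.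
Differentiating `r + 1` times kills `p`; by Rolle the result, `x^(e-r-1) H(x)`, still has at
least `s + ε` zeros in `(0, 1)`. The `ν`-th coefficient of the polynomial `H` is that of `Q`
times `(ν + e)(ν + e - 1) ⋯ (ν + e - r)`, and these factors alternate in sign for `ν ≤ r`
because `|e| < 1`. So Descartes' rule of signs bounds the positive zeros of `H` by the number
`V(Q(-x))` of sign changes in the coefficients of `Q(-x)`, and `V(Q) + V(Q(-x)) ≤ deg Q`.
The factor `(1 - x)^(r-s)` gives `Q` at least `r - s` sign changes, leaving at most
`deg q ≤ s - 1 + ε` zeros: hence `q = 0`, and then `p`, of degree at most `r`, has too many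
zeros.
-/

open Polynomial

namespace Polynomial

variable {R : Type*}

theorem signVariations_eq_of_sign_coeff_eq [Semiring R] [LinearOrder R] {P Q : R[X]}
    (h : ∀ j, SignType.sign (P.coeff j) = SignType.sign (Q.coeff j)) :
    P.signVariations = Q.signVariations := by
  have hsupp : P.support = Q.support := by
    ext j
    rw [mem_support_iff, mem_support_iff, ne_eq, ne_eq, ← sign_eq_zero_iff, h, sign_eq_zero_iff]
  have hdeg : P.degree = Q.degree := by simp only [degree, hsupp]
  simp only [signVariations, coeffList, hdeg, List.map_map]
  congr 4
  exact List.map_congr_left fun j _ => h j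

theorem coeff_X_mul_derivative [CommSemiring R] (P : R[X]) (j : ℕ) :
    (X * derivative P).coeff j = j * P.coeff j := by
  rcases j with _ | j
  · simp
  · rw [coeff_X_mul, coeff_derivative]
    push_cast
    ring

theorem coeff_comp_neg_X [CommRing R] (P : R[X]) (j : ℕ) :
    (P.comp (-X)).coeff j = (-1) ^ j * P.coeff j := by
  induction P using Polynomial.induction_on' with
  | add p q hp hq => simp [add_comp, hp, hq, mul_add]
  | monomial n a =>
    rw [monomial_comp, neg_pow, ← mul_assoc, ← C_1, ← C_neg, ← C_pow, ← C_mul, coeff_C_mul_X_pow,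
      coeff_monomial]
    by_cases h : j = n
    · simp [h, mul_comm]
    · simp [h, Ne.symm h]

section StrictOrderedCommRing

variable [CommRing R] [LinearOrder R] [IsStrictOrderedRing R]

theorem natDegree_comp_neg_X (P : R[X]) : (P.comp (-X)).natDegree = P.natDegree := by
  simp [natDegree_comp]

theorem leadingCoeff_comp_neg_X (P : R[X]) :
    (P.comp (-X)).leadingCoeff = (-1) ^ P.natDegree * P.leadingCoeff := by
  rw [leadingCoeff, natDegree_comp_neg_X, coeff_comp_neg_X, leadingCoeff]

theorem eraseLead_comp_neg_X (P : R[X]) : (P.comp (-X)).eraseLead = P.eraseLead.comp (-X) := by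
  ext j
  simp only [eraseLead_coeff, coeff_comp_neg_X, natDegree_comp_neg_X]
  split_ifs <;> simp

/-- Two consecutive nonzero coefficients `a_n, a_m` (`m < n`) give a sign change in `P` or in
`P(-X)`, but in both only if `n - m ≥ 2`. -/
theorem signVariations_add_signVariations_comp_neg_X_le (P : R[X]) :
    P.signVariations + (P.comp (-X)).signVariations ≤ P.natDegree := by
  induction hn : P.natDegree using Nat.strong_induction_on generalizing P with
  | _ n ih =>
  rcases eq_or_ne P 0 with rfl | hP
  · simp
  have hPX : P.comp (-X) ≠ 0 := by
    rw [← leadingCoeff_ne_zero, leadingCoeff_comp_neg_X]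
    simpa using hP
  rw [signVariations_eq_eraseLead_add_ite hP, signVariations_eq_eraseLead_add_ite hPX,
    eraseLead_comp_neg_X, leadingCoeff_comp_neg_X, leadingCoeff_comp_neg_X]
  by_cases hE : P.eraseLead = 0
  · simp [hE, hP]
  have hlt := P.eraseLead_natDegree_lt_or_eraseLead_eq_zero.resolve_right hE
  have hIH := ih _ (hn ▸ hlt) P.eraseLead rfl
  have hu : SignType.sign P.leadingCoeff ≠ 0 := by simpa using hP
  have hv : SignType.sign P.eraseLead.leadingCoeff ≠ 0 := by simpa using hE
  have hsign (k : ℕ) (x : R) : SignType.sign ((-1) ^ k * x) = (-1) ^ k * SignType.sign x := by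
    simp [sign_mul, sign_pow]
  obtain ⟨d, hd⟩ := Nat.exists_eq_add_of_lt hlt
  rw [hsign, hsign, hd, pow_succ, pow_add, ← hn, hd]
  generalize SignType.sign P.leadingCoeff = u at hu
  generalize SignType.sign P.eraseLead.leadingCoeff = v at hv
  rcases Nat.even_or_odd d with hd' | hd'
  · rw [hd'.neg_one_pow]
    rcases neg_one_pow_eq_or SignType P.eraseLead.natDegree with h | h <;>
    · rw [h]
      cases u <;> cases v <;> simp at hu hv ⊢ <;> omega
  · rw [hd'.neg_one_pow]
    obtain ⟨j, rfl⟩ := hd'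
    rcases neg_one_pow_eq_or SignType P.eraseLead.natDegree with h | h <;>
    · rw [h]
      cases u <;> cases v <;> simp at hu hv ⊢ <;> omega

theorem signVariations_add_le_signVariations_X_sub_C_pow_mul {η : R} (hη : 0 < η) {P : R[X]}
    (hP : P ≠ 0) (k : ℕ) : P.signVariations + k ≤ ((X - C η) ^ k * P).signVariations := by
  induction k with
  | zero => simp
  | succ k ih =>
    have hne : (X - C η) ^ k * P ≠ 0 := mul_ne_zero (pow_ne_zero _ (X_sub_C_ne_zero η)) hP
    rw [pow_succ', mul_assoc]
    exact (Nat.add_le_add_right ih 1).trans (succ_signVariations_le_X_sub_C_mul hη hne)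

theorem le_signVariations_one_sub_X_pow_mul {P : R[X]} (hP : P ≠ 0) (k : ℕ) :
    k ≤ ((1 - X) ^ k * P).signVariations := by
  have h : (1 - X : R[X]) ^ k * P = C ((-1) ^ k) * ((X - C 1) ^ k * P) := by
    rw [← mul_assoc, C_pow, C_neg, C_1, ← mul_pow, neg_one_mul, neg_sub]
  rw [h, signVariations_C_mul _ (pow_ne_zero _ (neg_ne_zero.2 one_ne_zero))]
  exact le_add_self.trans (signVariations_add_le_signVariations_X_sub_C_pow_mul one_pos hP k)

theorem card_le_signVariations {P : R[X]} (hP : P ≠ 0) {T : Finset R}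
    (hT : ∀ x ∈ T, 0 < x ∧ P.IsRoot x) : T.card ≤ P.signVariations := by
  classical
  calc T.card = T.val.countP (0 < ·) := by
        rw [Multiset.countP_eq_card.2 fun x hx => (hT x hx).1, Finset.card_val]
    _ ≤ P.roots.countP (0 < ·) := by
        refine Multiset.countP_le_of_le _ ((Multiset.le_iff_subset T.nodup).2 fun x hx => ?_)
        exact (mem_roots hP).2 (hT x hx).2
    _ ≤ P.signVariations := roots_countP_pos_le_signVariations P

end StrictOrderedCommRing

end Polynomial

theorem exists_finset_deriv_eq_zero {U : Set ℝ} (hU : U.OrdConnected) {f f' : ℝ → ℝ}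
    (hf : ∀ x ∈ U, HasDerivAt f (f' x) x) {T : Finset ℝ} (hTU : ↑T ⊆ U)
    (hT : ∀ x ∈ T, f x = 0) :
    ∃ T' : Finset ℝ, ↑T' ⊆ U ∧ (∀ x ∈ T', f' x = 0) ∧ T.card ≤ T'.card + 1 := by
  suffices ∃ T' : Finset ℝ, ↑T' ⊆ U ∧ (∀ x ∈ T', f' x = 0 ∧ ∃ y ∈ T, x < y) ∧
      T.card ≤ T'.card + 1 by
    obtain ⟨T', hT'U, hT', hcard⟩ := this
    exact ⟨T', hT'U, fun x hx => (hT' x hx).1, hcard⟩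
  induction T using Finset.induction_on_max with
  | empty => exact ⟨∅, by simp, by simp, by simp⟩
  | insert a s has ih =>
    have hsU : ↑s ⊆ U := fun x hx => hTU (Finset.mem_insert_of_mem hx)
    obtain ⟨T', hT'U, hT', hcard⟩ :=
      ih hsU fun x hx => hT x (Finset.mem_insert_of_mem hx)
    rcases s.eq_empty_or_nonempty with rfl | hne
    · exact ⟨∅, by simp, by simp, by simp⟩
    set b := s.max' hne
    have hba : b < a := has b (s.max'_mem hne)
    have hIcc : Set.Icc b a ⊆ U :=
      hU.out (hsU (s.max'_mem hne)) (hTU (Finset.mem_insert_self a s))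
    obtain ⟨c, hc, hfc⟩ := exists_hasDerivAt_eq_zero hba
      (fun x hx => (hf x (hIcc hx)).continuousAt.continuousWithinAt)
      ((hT b (Finset.mem_insert_of_mem (s.max'_mem hne))).trans
        (hT a (Finset.mem_insert_self a s)).symm)
      (fun x hx => hf x (hIcc (Set.Ioo_subset_Icc_self hx)))
    have hcT' : c ∉ T' := fun hcT => by
      obtain ⟨y, hy, hcy⟩ := (hT' c hcT).2
      linarith [s.le_max' y hy, hc.1]
    refine ⟨insert c T', ?_, ?_, ?_⟩
    · simpa [Set.insert_subset_iff] using ⟨hIcc (Set.Ioo_subset_Icc_self hc), hT'U⟩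
    · refine (Finset.forall_mem_insert _ _ _).2 ⟨⟨hfc, a, Finset.mem_insert_self a s, hc.2⟩,
        fun x hx => ⟨(hT' x hx).1, ?_⟩⟩
      obtain ⟨y, hy, hxy⟩ := (hT' x hx).2
      exact ⟨y, Finset.mem_insert_of_mem hy, hxy⟩
    · rw [Finset.card_insert_of_notMem (fun ha => lt_irrefl a (has a ha)),
        Finset.card_insert_of_notMem hcT']
      omega

theorem exists_finset_iterate_deriv_eq_zero {U : Set ℝ} (hU : U.OrdConnected)
    {u : ℕ → ℝ → ℝ} (hu : ∀ n, ∀ x ∈ U, HasDerivAt (u n) (u (n + 1) x) x) {T : Finset ℝ}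
    (hTU : ↑T ⊆ U) (hT : ∀ x ∈ T, u 0 x = 0) (n : ℕ) :
    ∃ T' : Finset ℝ, ↑T' ⊆ U ∧ (∀ x ∈ T', u n x = 0) ∧ T.card ≤ T'.card + n := by
  induction n with
  | zero => exact ⟨T, hTU, hT, le_rfl⟩
  | succ n ih =>
    obtain ⟨T₁, hT₁U, hT₁, hcard₁⟩ := ih
    obtain ⟨T₂, hT₂U, hT₂, hcard₂⟩ := exists_finset_deriv_eq_zero hU (hu n) hT₁U hT₁
    exact ⟨T₂, hT₂U, hT₂, by omega⟩

namespace Polynomial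

/-- On `(0, ∞)`, `x ^ (e - n) * (rpowMulDerivPoly e Q n).eval x` is the `n`-th derivative of
`x ^ e * Q.eval x`. -/
noncomputable def rpowMulDerivPoly (e : ℝ) (Q : ℝ[X]) : ℕ → ℝ[X]
  | 0 => Q
  | n + 1 => X * derivative (rpowMulDerivPoly e Q n) + C (e - n) * rpowMulDerivPoly e Q n

theorem coeff_rpowMulDerivPoly (e : ℝ) (Q : ℝ[X]) (n j : ℕ) :
    (rpowMulDerivPoly e Q n).coeff j = (descPochhammer ℝ n).eval (j + e) * Q.coeff j := by
  induction n with
  | zero => simp [rpowMulDerivPoly]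
  | succ n ih =>
    rw [rpowMulDerivPoly, coeff_add, coeff_X_mul_derivative, coeff_C_mul, ih,
      descPochhammer_succ_eval]
    ring

theorem hasDerivAt_rpow_mul_eval_rpowMulDerivPoly (e : ℝ) (Q : ℝ[X]) (n : ℕ) {x : ℝ}
    (hx : 0 < x) :
    HasDerivAt (fun y => y ^ (e - n) * (rpowMulDerivPoly e Q n).eval y)
      (x ^ (e - (n + 1 : ℕ)) * (rpowMulDerivPoly e Q (n + 1)).eval x) x := by
  refine ((Real.hasDerivAt_rpow_const (p := e - n) (Or.inl hx.ne')).fun_mul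
    ((rpowMulDerivPoly e Q n).hasDerivAt x)).congr_deriv ?_
  rw [rpowMulDerivPoly.eq_2, eval_add, eval_mul, eval_mul, eval_X, eval_C,
    show e - n = e - (n + 1 : ℕ) + 1 by push_cast; ring, Real.rpow_add_one hx.ne']
  push_cast
  ring_nf

theorem descPochhammer_eval_add_ne_zero {e : ℝ} (he : e ∈ Set.Ioo (-1) 1) (he0 : e ≠ 0)
    (n j : ℕ) : (descPochhammer ℝ n).eval (j + e) ≠ 0 := by
  rw [descPochhammer_eval_eq_prod_range]
  refine Finset.prod_ne_zero_iff.2 fun i _ hi => he0 ?_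
  have hint : e = ((i - j : ℤ) : ℝ) := by push_cast; linarith
  have h1 : -1 < (i - j : ℤ) := by exact_mod_cast hint ▸ he.1
  have h2 : (i - j : ℤ) < 1 := by exact_mod_cast hint ▸ he.2
  rw [hint, show (i - j : ℤ) = 0 by omega, Int.cast_zero]

theorem sign_descPochhammer_eval_add {e : ℝ} (he : e ∈ Set.Ioo (-1) 1) {r j : ℕ} (hj : j ≤ r) :
    SignType.sign ((descPochhammer ℝ (r + 1)).eval (j + e)) =
      SignType.sign ((-1) ^ j * (descPochhammer ℝ (r + 1)).eval e) := by
  induction j with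
  | zero => simp
  | succ j ih =>
    have hlow : (descPochhammer ℝ (r + 1)).eval (j + e) =
        (descPochhammer ℝ r).eval (j + e) * (j + e - r) := descPochhammer_succ_eval r _
    have hup : (descPochhammer ℝ (r + 1)).eval ((j + 1 : ℕ) + e) =
        ((j + 1 : ℕ) + e) * (descPochhammer ℝ r).eval (j + e) := by
      rw [descPochhammer_succ_left, eval_mul, eval_comp, eval_X, eval_sub, eval_X, eval_one]
      push_cast
      ring_nf
    have hr : (j : ℝ) + 1 ≤ r := by exact_mod_cast hj
    have hneg : ((j + 1 : ℕ) + e) / (j + e - r) < 0 :=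
      div_neg_of_pos_of_neg (by push_cast; linarith [he.1]) (by linarith [he.2])
    have hratio : (descPochhammer ℝ (r + 1)).eval ((j + 1 : ℕ) + e) =
        ((j + 1 : ℕ) + e) / (j + e - r) * (descPochhammer ℝ (r + 1)).eval (j + e) := by
      rw [hup, hlow]
      field_simp [show (j : ℝ) + e - r ≠ 0 by linarith [he.2]]
    rw [hratio, sign_mul, ih (by omega), sign_neg hneg, pow_succ, mul_comm _ (-1 : ℝ),
      mul_assoc, sign_mul (-1 : ℝ), sign_neg (by norm_num : (-1 : ℝ) < 0)]

theorem signVariations_rpowMulDerivPoly {e : ℝ} (he : e ∈ Set.Ioo (-1) 1) (he0 : e ≠ 0)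
    {Q : ℝ[X]} {r : ℕ} (hQ : Q.natDegree ≤ r) :
    (rpowMulDerivPoly e Q (r + 1)).signVariations = (Q.comp (-X)).signVariations := by
  rw [← signVariations_C_mul (Q.comp (-X)) (descPochhammer_eval_add_ne_zero he he0 (r + 1) 0)]
  refine signVariations_eq_of_sign_coeff_eq fun j => ?_
  rw [coeff_rpowMulDerivPoly, coeff_C_mul, coeff_comp_neg_X]
  rcases le_or_gt j r with hj | hj
  · rw [sign_mul, sign_descPochhammer_eval_add he hj, Nat.cast_zero, zero_add]
    simp only [sign_mul]
    ac_rfl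
  · simp [coeff_eq_zero_of_natDegree_lt (hQ.trans_lt hj)]

theorem card_le_signVariations_comp_neg_X_of_eval_add_rpow_mul_eq_zero {e : ℝ}
    (he : e ∈ Set.Ioo (-1) 1) (he0 : e ≠ 0) {r : ℕ} {p Q : ℝ[X]} (hp : p.natDegree ≤ r)
    (hQ : Q ≠ 0) (hQr : Q.natDegree ≤ r) {T : Finset ℝ}
    (hT : ∀ x ∈ T, 0 < x ∧ p.eval x + x ^ e * Q.eval x = 0) :
    T.card ≤ r + 1 + (Q.comp (-X)).signVariations := by
  set u : ℕ → ℝ → ℝ := fun n x =>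
    (derivative^[n] p).eval x + x ^ (e - n) * (rpowMulDerivPoly e Q n).eval x
  have hu : ∀ n, ∀ x ∈ Set.Ioi (0 : ℝ), HasDerivAt (u n) (u (n + 1) x) x := fun n x hx => by
    have hp' := (derivative^[n] p).hasDerivAt x
    rw [← Function.iterate_succ_apply' derivative] at hp'
    exact hp'.add (hasDerivAt_rpow_mul_eval_rpowMulDerivPoly e Q n hx)
  have hT0 : ∀ x ∈ T, u 0 x = 0 := fun x hx => by
    simpa [u, rpowMulDerivPoly] using (hT x hx).2
  obtain ⟨T', hT'pos, hT', hcard⟩ := exists_finset_iterate_deriv_eq_zero Set.ordConnected_Ioi hu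
    (fun x hx => (hT x hx).1) hT0 (r + 1)
  have hH : rpowMulDerivPoly e Q (r + 1) ≠ 0 := fun h0 => by
    have hlead := coeff_rpowMulDerivPoly e Q (r + 1) Q.natDegree
    rw [h0, coeff_zero] at hlead
    exact mul_ne_zero (descPochhammer_eval_add_ne_zero he he0 _ _) (leadingCoeff_ne_zero.2 hQ)
      hlead.symm
  have hroots : ∀ x ∈ T', 0 < x ∧ (rpowMulDerivPoly e Q (r + 1)).IsRoot x := fun x hxT => by
    have hx : 0 < x := hT'pos hxT
    have h := hT' x hxT
    simp only [u, iterate_derivative_eq_zero (Nat.lt_succ_of_le hp), eval_zero, zero_add] at h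
    exact ⟨hx, (mul_eq_zero.1 h).resolve_left (Real.rpow_pos_of_pos hx _).ne'⟩
  have hV := card_le_signVariations hH hroots
  rw [signVariations_rpowMulDerivPoly he he0 hQr] at hV
  omega

theorem card_le_of_eval_add_rpow_mul_one_sub_X_pow_mul_eq_zero {e : ℝ}
    (he : e ∈ Set.Ioo (-1) 1) (he0 : e ≠ 0) {r k : ℕ} {p q : ℝ[X]} (hp : p.natDegree ≤ r)
    (hq : q ≠ 0) (hkq : k + q.natDegree ≤ r) {T : Finset ℝ}
    (hT : ∀ x ∈ T, 0 < x ∧ p.eval x + x ^ e * ((1 - X) ^ k * q).eval x = 0) :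
    T.card ≤ r + 1 + q.natDegree := by
  have hQ : (1 - X) ^ k * q ≠ 0 :=
    mul_ne_zero (pow_ne_zero _ fun h => by simpa using congrArg (eval 0) h) hq
  have hQdeg : ((1 - X) ^ k * q).natDegree ≤ k + q.natDegree := by
    refine natDegree_mul_le.trans (Nat.add_le_add_right ?_ _)
    simpa using natDegree_pow_le_of_le k (natDegree_sub_le (1 : ℝ[X]) X)
  have hT' := card_le_signVariations_comp_neg_X_of_eval_add_rpow_mul_eq_zero he he0 hp hQ
    (hQdeg.trans hkq) hT
  have hneg := signVariations_add_signVariations_comp_neg_X_le ((1 - X) ^ k * q)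
  have hk := le_signVariations_one_sub_X_pow_mul hq k
  omega

end Polynomial

theorem Real.sq_rpow_intCast_div_two {t : ℝ} (ht : 0 ≤ t) (δ : ℤ) :
    (t ^ 2) ^ ((δ : ℝ) / 2) = t ^ δ := by
  rw [← Real.rpow_natCast, ← Real.rpow_mul ht, Nat.cast_ofNat, mul_div_cancel₀ _ two_ne_zero,
    Real.rpow_intCast]

/-- Proposition 2.4/`prop:1`: Let `r > s > 0` be integers, `ε ∈ {0,1}`,
`δ ∈ {1,-1}`.  Let `p` be a real polynomial of degree at most `r` and `q` of degree at
most `s-1+ε`, and let `g(t) = p(t²) + t^δ (1-t²)^{r-s} q(t²)` on `(0,1)`.  If `g`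
vanishes at `r+s+1+ε` distinct points of `(0,1)`, then `p = 0` and `q = 0`. -/
theorem statement3 (r s : ℕ) (hs : 0 < s) (hrs : s < r)
    (ε : ℕ) (hε : ε = 0 ∨ ε = 1) (δ : ℤ) (hδ : δ = 1 ∨ δ = -1)
    (p q : Polynomial ℝ) (hp : p.natDegree ≤ r) (hq : q.natDegree ≤ s - 1 + ε)
    (S : Finset ℝ) (hcard : S.card = r + s + 1 + ε)
    (hS : ∀ t ∈ S, t ∈ Set.Ioo (0 : ℝ) 1)
    (hvanish : ∀ t ∈ S,
      Polynomial.eval (t ^ 2) p + t ^ δ * (1 - t ^ 2) ^ (r - s) * Polynomial.eval (t ^ 2) q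
        = 0) :
    p = 0 ∧ q = 0 := by
  have he : (δ : ℝ) / 2 ∈ Set.Ioo (-1) 1 := by rcases hδ with rfl | rfl <;> norm_num
  have he0 : (δ : ℝ) / 2 ≠ 0 := by rcases hδ with rfl | rfl <;> norm_num
  set R := S.image (· ^ 2)
  have hRcard : R.card = r + s + 1 + ε := by
    rw [← hcard]
    refine Finset.card_image_of_injOn fun x hx y hy hxy => ?_
    exact (pow_left_inj₀ (hS x hx).1.le (hS y hy).1.le two_ne_zero).1 hxy
  have hR : ∀ x ∈ R,
      0 < x ∧ p.eval x + x ^ ((δ : ℝ) / 2) * ((1 - X) ^ (r - s) * q).eval x = 0 := by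
    simp only [R, Finset.mem_image]
    rintro _ ⟨t, ht, rfl⟩
    refine ⟨pow_pos (hS t ht).1 2, ?_⟩
    simpa [Real.sq_rpow_intCast_div_two (hS t ht).1.le, mul_assoc] using hvanish t ht
  have hq0 : q = 0 := by
    by_contra hq0
    have := card_le_of_eval_add_rpow_mul_one_sub_X_pow_mul_eq_zero he he0 hp hq0 (by omega) hR
    omega
  subst hq0
  refine ⟨eq_zero_of_natDegree_lt_card_of_eval_eq_zero' p R (fun x hx => ?_) (by omega), rfl⟩
  simpa using (hR x hx).2
end

section
/- Let m be a positive integer and let θ₁, …, θ_{2m} be pairwise distinct numbers in (0,π) with θ_{2m+1−i} = π − θ_i for i = 1, …, m. For α ∈ {0,1} set φ_j^{α} = (2j+α)π/(2m), and define λ_i = ∫_{−1}^{1} ∏_{k=1, k≠i}^{2m} (t − cosθ_k)/(cosθ_i − cosθ_k) dt for i = 1, …, 2m. Then for every T ∈ Π_{2m−1}(S²), ∫_{S²} T(ξ) dω(ξ) = (π/m) Σ_{i=1}^{m} λ_i Σ_{j=0}^{2m−1} T̃(θ_i, φ_j^{0}) + (π/m) Σ_{i=m+1}^{2m} λ_i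 Σ_{j=0}^{2m−1} T̃(θ_i, φ_j^{1}). -/
/-!
For fixed `ϑ`, `φ ↦ T̃(ϑ, φ)` is a trigonometric polynomial of degree `< 2m`, so the rule with
`2m` equally spaced nodes (with any offset, in particular `φⱼ⁰` and `φⱼ¹`) integrates it exactly.
Its integral over `φ` is `P (cos ϑ)` for a polynomial `P` of degree `< 2m`: the monomials
`cos ^ a φ * sin ^ b φ` with `a` or `b` odd have mean zero, and the others carry an even power of
`sin ϑ`. Substituting `t = cos ϑ` turns the sphere integral into `∫_{-1}^1 P`, which the
interpolatory rule at the `2m` distinct nodes `cos θᵢ` with weights `λᵢ` integrates exactly.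
-/

open Real Finset

theorem sum_range_exp_int_mul_eq_zero {N : ℕ} {k : ℤ} (hk : ¬(N : ℤ) ∣ k) (α : ℝ) :
    ∑ j ∈ range N, Complex.exp (k * ((2 * j + α) * π / N : ℝ) * Complex.I) = 0 := by
  rcases Nat.eq_zero_or_pos N with rfl | hN
  · simp
  have hζ := Complex.isPrimitiveRoot_exp N hN.ne'
  have hω : Complex.exp (2 * π * Complex.I / N) ^ k ≠ 1 :=
    fun h ↦ hk ((hζ.zpow_eq_one_iff_dvd k).1 h)
  have hωN : (Complex.exp (2 * π * Complex.I / N) ^ k) ^ N = 1 := by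
    rw [← zpow_natCast, ← zpow_mul, mul_comm k, zpow_mul, zpow_natCast, hζ.pow_eq_one, one_zpow]
  have hterm : ∀ j : ℕ, Complex.exp (k * ((2 * j + α) * π / N : ℝ) * Complex.I)
      = Complex.exp (k * α * π / N * Complex.I)
          * (Complex.exp (2 * π * Complex.I / N) ^ k) ^ j := by
    intro j
    rw [← Complex.exp_int_mul, ← Complex.exp_nat_mul, ← Complex.exp_add]
    congr 1
    push_cast
    ring
  simp_rw [hterm, ← mul_sum, geom_sum_eq hω, hωN, sub_self, zero_div, mul_zero]

theorem integral_exp_int_mul_I_eq_zero {k : ℤ} (hk : k ≠ 0) :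
    ∫ φ in (0 : ℝ)..2 * π, Complex.exp (k * φ * Complex.I) = 0 := by
  have hkI : (k : ℂ) * Complex.I ≠ 0 := by simp [hk]
  simp_rw [mul_right_comm _ _ Complex.I]
  rw [integral_exp_mul_complex hkI]
  have : (k : ℂ) * Complex.I * (2 * π : ℝ) = k * (2 * π * Complex.I) := by push_cast; ring
  rw [this, Complex.exp_int_mul_two_pi_mul_I]
  simp

theorem riemannSum_exp_int_mul_eq_integral {N : ℕ} {k : ℤ} (hk : k.natAbs < N) (α : ℝ) :
    2 * π / N * ∑ j ∈ range N, Complex.exp (k * ((2 * j + α) * π / N : ℝ) * Complex.I)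
      = ∫ φ in (0 : ℝ)..2 * π, Complex.exp (k * φ * Complex.I) := by
  rcases eq_or_ne k 0 with rfl | hk0
  · have hN : (N : ℂ) ≠ 0 := by exact_mod_cast (Nat.pos_of_ne_zero (by omega)).ne'
    simp [field]
  · have hdvd : ¬(N : ℤ) ∣ k := fun h ↦ hk0 (Int.eq_zero_of_dvd_of_natAbs_lt_natAbs h (by simpa))
    rw [sum_range_exp_int_mul_eq_zero hdvd, integral_exp_int_mul_I_eq_zero hk0, mul_zero]

theorem riemannSum_trigPoly_eq_integral {ι : Type*} (s : Finset ι) (c : ι → ℂ) (k : ι → ℤ)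
    {N : ℕ} (hk : ∀ x ∈ s, (k x).natAbs < N) (α : ℝ) :
    2 * π / N * ∑ j ∈ range N, ∑ x ∈ s,
        c x * Complex.exp (k x * ((2 * j + α) * π / N : ℝ) * Complex.I)
      = ∫ φ in (0 : ℝ)..2 * π, ∑ x ∈ s, c x * Complex.exp (k x * φ * Complex.I) := by
  rw [intervalIntegral.integral_finsetSum fun x _ ↦ by
    apply Continuous.intervalIntegrable; fun_prop, sum_comm, mul_sum]
  refine sum_congr rfl fun x hx ↦ ?_
  rw [intervalIntegral.integral_const_mul, ← riemannSum_exp_int_mul_eq_integral (hk x hx) α,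
    ← mul_sum]
  ring

theorem cos_pow_mul_sin_pow_eq_sum_exp (a b : ℕ) (φ : ℝ) :
    ((cos φ ^ a * sin φ ^ b : ℝ) : ℂ) = ∑ x ∈ range (a + 1) ×ˢ range (b + 1),
      (-1) ^ x.2 * a.choose x.1 * b.choose x.2 * (1 / 2) ^ a * (Complex.I / 2) ^ b
        * Complex.exp ((2 * x.1 - a + 2 * x.2 - b : ℤ) * φ * Complex.I) := by
  set e := Complex.exp (φ * Complex.I) with he_def
  have he : e ≠ 0 := Complex.exp_ne_zero _
  have hcos : (cos φ : ℂ) = (e + e⁻¹) * (1 / 2) := by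
    rw [Complex.ofReal_cos, Complex.cos, he_def, ← Complex.exp_neg]
    ring_nf
  have hsin : (sin φ : ℂ) = (-e + e⁻¹) * (Complex.I / 2) := by
    rw [Complex.ofReal_sin, Complex.sin, he_def, ← Complex.exp_neg]
    ring_nf
  rw [Complex.ofReal_mul, Complex.ofReal_pow, Complex.ofReal_pow, hcos, hsin, mul_pow, mul_pow,
    add_pow, add_pow, sum_mul, sum_mul, sum_product]
  refine sum_congr rfl fun p hp ↦ ?_
  rw [sum_mul, mul_sum]
  refine sum_congr rfl fun q hq ↦ ?_
  have hpa : p ≤ a := Nat.lt_succ_iff.1 (mem_range.1 hp)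
  have hqb : q ≤ b := Nat.lt_succ_iff.1 (mem_range.1 hq)
  have hexp : Complex.exp ((2 * p - a + 2 * q - b : ℤ) * φ * Complex.I)
      = e ^ p * e⁻¹ ^ (a - p) * (e ^ q * e⁻¹ ^ (b - q)) := by
    rw [mul_assoc, Complex.exp_int_mul, inv_pow, inv_pow, ← zpow_natCast e p, ← zpow_natCast e q,
      ← zpow_natCast e (a - p), ← zpow_natCast e (b - q), ← zpow_neg, ← zpow_neg,
      ← zpow_add₀ he, ← zpow_add₀ he, ← zpow_add₀ he]
    congr 1
    push_cast [Nat.cast_sub hpa, Nat.cast_sub hqb]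
    ring
  rw [hexp, neg_pow]
  ring

theorem riemannSum_cos_pow_mul_sin_pow {N a b : ℕ} (hab : a + b < N) (α : ℝ) :
    2 * π / N * ∑ j ∈ range N, cos ((2 * j + α) * π / N) ^ a * sin ((2 * j + α) * π / N) ^ b
      = ∫ φ in (0 : ℝ)..2 * π, cos φ ^ a * sin φ ^ b := by
  apply Complex.ofReal_injective
  rw [Complex.ofReal_mul, Complex.ofReal_sum, ← intervalIntegral.integral_ofReal]
  simp_rw [cos_pow_mul_sin_pow_eq_sum_exp]
  rw [show ((2 * π / N : ℝ) : ℂ) = 2 * π / N by push_cast; rfl]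
  have hk : ∀ x ∈ range (a + 1) ×ˢ range (b + 1), (2 * x.1 - a + 2 * x.2 - b : ℤ).natAbs < N := by
    intro x hx
    simp only [mem_product, mem_range] at hx
    omega
  exact riemannSum_trigPoly_eq_integral _ _ _ hk α

theorem Function.Periodic.intervalIntegral_comp_sub_left {E : Type*} [NormedAddCommGroup E]
    [NormedSpace ℝ E] {f : ℝ → E} {T : ℝ} (hf : Function.Periodic f T) (c : ℝ) :
    ∫ x in (0 : ℝ)..T, f (c - x) = ∫ x in (0 : ℝ)..T, f x := by
  have := hf.intervalIntegral_add_eq (c - T) 0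
  rw [sub_add_cancel, zero_add] at this
  rw [intervalIntegral.integral_comp_sub_left, sub_zero, this]

theorem integral_cos_pow_mul_sin_pow_eq_zero {a b : ℕ} (h : Odd a ∨ Odd b) :
    ∫ φ in (0 : ℝ)..2 * π, cos φ ^ a * sin φ ^ b = 0 := by
  have hf : Function.Periodic (fun φ ↦ cos φ ^ a * sin φ ^ b) (2 * π) := fun φ ↦ by
    simp only [cos_add_two_pi, sin_add_two_pi]
  obtain ⟨c, hc⟩ : ∃ c, ∀ φ, cos (c - φ) ^ a * sin (c - φ) ^ b = -(cos φ ^ a * sin φ ^ b) := by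
    rcases h with ha | hb
    · exact ⟨π, fun φ ↦ by rw [cos_pi_sub, sin_pi_sub, ha.neg_pow, neg_mul]⟩
    · exact ⟨0, fun φ ↦ by rw [zero_sub, cos_neg, sin_neg, hb.neg_pow, mul_neg]⟩
  have := hf.intervalIntegral_comp_sub_left c
  simp only [hc, intervalIntegral.integral_neg] at this
  linarith

theorem integral_comp_cos_mul_sin {g : ℝ → ℝ} (hg : Continuous g) :
    ∫ ϑ in (0 : ℝ)..π, g (cos ϑ) * sin ϑ = ∫ t in (-1 : ℝ)..1, g t := by
  have := intervalIntegral.integral_comp_mul_deriv (a := π) (b := 0) (f' := fun ϑ ↦ -sin ϑ)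
    (fun ϑ _ ↦ hasDerivAt_cos ϑ) continuous_sin.neg.continuousOn hg
  simp only [Function.comp_apply, mul_neg, intervalIntegral.integral_neg, cos_pi, cos_zero] at this
  rwa [intervalIntegral.integral_symm, neg_neg] at this

theorem MvPolynomial.eval_spherical_eq_sum (T : MvPolynomial (Fin 3) ℝ) (ϑ φ : ℝ) :
    MvPolynomial.eval ![sin ϑ * cos φ, sin ϑ * sin φ, cos ϑ] T
      = ∑ d ∈ T.support,
          T.coeff d * sin ϑ ^ (d 0 + d 1) * cos ϑ ^ d 2 * (cos φ ^ d 0 * sin φ ^ d 1) := by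
  rw [MvPolynomial.eval_eq']
  refine sum_congr rfl fun d _ ↦ ?_
  simp only [Fin.prod_univ_three, Matrix.cons_val_zero, Matrix.cons_val_one, Matrix.cons_val_two,
    Matrix.head_cons, Matrix.tail_cons, mul_pow, pow_add]
  ring

theorem MvPolynomial.exponent_sum_le_totalDegree_of_mem_support {R : Type*} [CommSemiring R]
    {T : MvPolynomial (Fin 3) R} {d : Fin 3 →₀ ℕ} (hd : d ∈ T.support) :
    d 0 + d 1 + d 2 ≤ T.totalDegree := by
  have := MvPolynomial.le_totalDegree hd
  rwa [Finsupp.sum_fintype _ _ fun _ ↦ rfl, Fin.sum_univ_three] at this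

/-- The polynomial `P` with `P (cos ϑ) = ∫₀^{2π} T̃(ϑ, φ) dφ`: only the monomials with `d 0` and
`d 1` both even survive the integration over `φ`, and for them
`sin ϑ ^ (d 0 + d 1) = (1 - cos ϑ ^ 2) ^ ((d 0 + d 1) / 2)`. -/
noncomputable def MvPolynomial.azimuthalIntegral (T : MvPolynomial (Fin 3) ℝ) : Polynomial ℝ :=
  ∑ d ∈ T.support, Polynomial.C (T.coeff d * ∫ φ in (0 : ℝ)..2 * π, cos φ ^ d 0 * sin φ ^ d 1)
    * (1 - Polynomial.X ^ 2) ^ ((d 0 + d 1) / 2) * Polynomial.X ^ d 2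

theorem MvPolynomial.eval_cos_azimuthalIntegral (T : MvPolynomial (Fin 3) ℝ) (ϑ : ℝ) :
    T.azimuthalIntegral.eval (cos ϑ) = ∑ d ∈ T.support, T.coeff d * sin ϑ ^ (d 0 + d 1)
      * cos ϑ ^ d 2 * ∫ φ in (0 : ℝ)..2 * π, cos φ ^ d 0 * sin φ ^ d 1 := by
  rw [azimuthalIntegral, Polynomial.eval_finsetSum]
  refine sum_congr rfl fun d _ ↦ ?_
  simp only [Polynomial.eval_mul, Polynomial.eval_pow, Polynomial.eval_C, Polynomial.eval_sub,
    Polynomial.eval_one, Polynomial.eval_X]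
  by_cases h : Even (d 0) ∧ Even (d 1)
  · rw [← sin_sq, ← pow_mul, Nat.mul_div_cancel' (h.1.add h.2).two_dvd]
    ring
  · rw [not_and_or, Nat.not_even_iff_odd, Nat.not_even_iff_odd] at h
    simp [integral_cos_pow_mul_sin_pow_eq_zero h]

theorem MvPolynomial.natDegree_azimuthalIntegral_le (T : MvPolynomial (Fin 3) ℝ) :
    T.azimuthalIntegral.natDegree ≤ T.totalDegree := by
  refine Polynomial.natDegree_sum_le_of_forall_le _ _ fun d hd ↦ ?_
  have hdeg := exponent_sum_le_totalDegree_of_mem_support hd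
  calc _ ≤ (d 0 + d 1) / 2 * 2 + d 2 := by compute_degree
    _ ≤ T.totalDegree := by omega

theorem MvPolynomial.integral_eval_spherical (T : MvPolynomial (Fin 3) ℝ) (ϑ : ℝ) :
    ∫ φ in (0 : ℝ)..2 * π, MvPolynomial.eval ![sin ϑ * cos φ, sin ϑ * sin φ, cos ϑ] T
      = T.azimuthalIntegral.eval (cos ϑ) := by
  simp_rw [eval_spherical_eq_sum]
  rw [intervalIntegral.integral_finsetSum fun d _ ↦ by
    apply Continuous.intervalIntegrable; fun_prop, eval_cos_azimuthalIntegral]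
  exact sum_congr rfl fun d _ ↦ intervalIntegral.integral_const_mul _ _

theorem MvPolynomial.riemannSum_eval_spherical {T : MvPolynomial (Fin 3) ℝ} {N : ℕ}
    (hT : T.totalDegree < N) (ϑ α : ℝ) :
    2 * π / N * ∑ j ∈ range N, MvPolynomial.eval ![sin ϑ * cos ((2 * j + α) * π / N),
        sin ϑ * sin ((2 * j + α) * π / N), cos ϑ] T
      = T.azimuthalIntegral.eval (cos ϑ) := by
  simp_rw [eval_spherical_eq_sum]
  rw [sum_comm, mul_sum, eval_cos_azimuthalIntegral]
  refine sum_congr rfl fun d hd ↦ ?_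
  have hab : d 0 + d 1 < N := by have := exponent_sum_le_totalDegree_of_mem_support hd; omega
  rw [← riemannSum_cos_pow_mul_sin_pow hab α, ← mul_sum]
  ring

theorem Lagrange.eval_basis {F ι : Type*} [Field F] [DecidableEq ι] (s : Finset ι) (v : ι → F)
    (i : ι) (x : F) :
    (Lagrange.basis s v i).eval x = ∏ j ∈ s.erase i, (x - v j) / (v i - v j) := by
  simp only [Lagrange.basis, Lagrange.basisDivisor, Polynomial.eval_prod, Polynomial.eval_mul,
    Polynomial.eval_C, Polynomial.eval_sub, Polynomial.eval_X, div_eq_inv_mul]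

theorem Lagrange.intervalIntegral_eval_eq_sum {ι : Type*} [DecidableEq ι] {s : Finset ι}
    {v : ι → ℝ} (hvs : Set.InjOn v s) {P : Polynomial ℝ} (hP : P.degree < #s) (a b : ℝ) :
    ∫ x in a..b, P.eval x = ∑ i ∈ s, P.eval (v i) * ∫ x in a..b, (Lagrange.basis s v i).eval x := by
  conv_lhs => rw [Lagrange.eq_interpolate hvs hP]
  simp_rw [Lagrange.interpolate_apply, Polynomial.eval_finsetSum, Polynomial.eval_mul,
    Polynomial.eval_C]
  rw [intervalIntegral.integral_finsetSum fun i _ ↦ by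
    apply Continuous.intervalIntegrable; fun_prop]
  exact sum_congr rfl fun i _ ↦ intervalIntegral.integral_const_mul _ _

theorem MvPolynomial.integral_spherical_eq_sum_lagrange {ι : Type*} [DecidableEq ι]
    {s : Finset ι} {θ : ι → ℝ} (hθ : Set.InjOn (cos ∘ θ) s) {T : MvPolynomial (Fin 3) ℝ}
    (hT : T.totalDegree < #s) :
    ∫ ϑ in (0 : ℝ)..π, (∫ φ in (0 : ℝ)..2 * π,
        MvPolynomial.eval ![sin ϑ * cos φ, sin ϑ * sin φ, cos ϑ] T * sin ϑ)
      = ∑ i ∈ s, (∫ t in (-1 : ℝ)..1, (Lagrange.basis s (cos ∘ θ) i).eval t)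
          * T.azimuthalIntegral.eval (cos (θ i)) := by
  have hP : T.azimuthalIntegral.degree < #s :=
    (Polynomial.degree_le_of_natDegree_le T.natDegree_azimuthalIntegral_le).trans_lt
      (by exact_mod_cast hT)
  simp_rw [intervalIntegral.integral_mul_const, T.integral_eval_spherical]
  rw [integral_comp_cos_mul_sin T.azimuthalIntegral.continuous,
    Lagrange.intervalIntegral_eval_eq_sum hθ hP]
  exact sum_congr rfl fun i _ ↦ mul_comm _ _

theorem statement8_general (m : ℕ) (hm : 0 < m)
    (θ : ℕ → ℝ)
    (hθ : ∀ i ∈ Icc 1 (2 * m), θ i ∈ Set.Ioo 0 π)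
    (hinj : Set.InjOn θ (Set.Icc 1 (2 * m)))
    (lam : ℕ → ℝ)
    (hlam : ∀ i ∈ Icc 1 (2 * m),
      lam i = ∫ t in (-1 : ℝ)..1,
        ∏ k ∈ (Icc 1 (2 * m)).erase i, (t - cos (θ k)) / (cos (θ i) - cos (θ k)))
    (T : MvPolynomial (Fin 3) ℝ) (hT : T.totalDegree ≤ 2 * m - 1) :
    (∫ ϑ in (0 : ℝ)..π,
      (∫ φ in (0 : ℝ)..(2 * π),
        MvPolynomial.eval ![sin ϑ * cos φ, sin ϑ * sin φ, cos ϑ] T * sin ϑ))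
    = π / m * ∑ i ∈ Icc 1 m, lam i * ∑ j ∈ Finset.range (2 * m),
        MvPolynomial.eval
          ![sin (θ i) * cos ((2 * j) * π / (2 * m)),
            sin (θ i) * sin ((2 * j) * π / (2 * m)), cos (θ i)] T
      + π / m * ∑ i ∈ Icc (m + 1) (2 * m), lam i * ∑ j ∈ Finset.range (2 * m),
          MvPolynomial.eval
            ![sin (θ i) * cos ((2 * j + 1) * π / (2 * m)),
              sin (θ i) * sin ((2 * j + 1) * π / (2 * m)), cos (θ i)] T := by
  have hnode : ∀ i (α : ℝ), π / m * ∑ j ∈ range (2 * m), MvPolynomial.eval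
      ![sin (θ i) * cos ((2 * j + α) * π / (2 * m)),
        sin (θ i) * sin ((2 * j + α) * π / (2 * m)), cos (θ i)] T
      = T.azimuthalIntegral.eval (cos (θ i)) := by
    intro i α
    have := T.riemannSum_eval_spherical (N := 2 * m) (by omega) (θ i) α
    push_cast at this
    rwa [mul_div_mul_left _ _ two_ne_zero] at this
  have hnode0 := fun i ↦ hnode i 0
  simp only [add_zero] at hnode0
  have hcos : Set.InjOn (cos ∘ θ) (Icc 1 (2 * m) : Finset ℕ) := by
    rw [coe_Icc]
    exact injOn_cos.comp hinj fun i hi ↦ Set.Ioo_subset_Icc_self (hθ i (mem_Icc.2 hi))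
  have hsplit := sum_Ioc_consecutive (fun i ↦ lam i * T.azimuthalIntegral.eval (cos (θ i)))
    m.zero_le (by omega : m ≤ 2 * m)
  simp only [← Icc_add_one_left_eq_Ioc, zero_add] at hsplit
  rw [MvPolynomial.integral_spherical_eq_sum_lagrange hcos (by rw [Nat.card_Icc]; omega)]
  calc _ = ∑ i ∈ Icc 1 (2 * m), lam i * T.azimuthalIntegral.eval (cos (θ i)) := by
        refine sum_congr rfl fun i hi ↦ ?_
        simp_rw [hlam i hi, Lagrange.eval_basis, Function.comp_apply]
    _ = _ := by
        rw [← hsplit, mul_sum, mul_sum]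
        congr 1 <;> refine sum_congr rfl fun i _ ↦ ?_
        · rw [mul_left_comm, hnode0]
        · rw [mul_left_comm, hnode]

/-- Proposition 3.2: Let `θ₁,…,θ_{2m}` be pairwise distinct points of
`(0,π)` with `θ_{2m+1-i} = π - θᵢ`, and let `λᵢ = ∫_{-1}^1 ∏_{k≠i}
(t - cos θ_k)/(cos θᵢ - cos θ_k) dt`.  Then for every `T ∈ Π_{2m-1}(S²)`,
`∫_{S²} T dω = (π/m) ∑_{i=1}^m λᵢ ∑_{j=0}^{2m-1} T̃(θᵢ, φⱼ⁰)
 + (π/m) ∑_{i=m+1}^{2m} λᵢ ∑_{j=0}^{2m-1} T̃(θᵢ, φⱼ¹)`,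
where `φⱼ^α = (2j+α)π/(2m)` and `∫_{S²} F dω = ∫₀^π ∫₀^{2π} F̃(θ,φ) sin θ dφ dθ`. -/
theorem statement8 (m : ℕ) (hm : 0 < m)
    (θ : ℕ → ℝ)
    (hθ : ∀ i ∈ Icc 1 (2 * m), θ i ∈ Set.Ioo 0 π)
    (hinj : Set.InjOn θ (Set.Icc 1 (2 * m)))
    (hsym : ∀ i ∈ Icc 1 m, θ (2 * m + 1 - i) = π - θ i)
    (lam : ℕ → ℝ)
    (hlam : ∀ i ∈ Icc 1 (2 * m),
      lam i = ∫ t in (-1 : ℝ)..1,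
        ∏ k ∈ (Icc 1 (2 * m)).erase i, (t - cos (θ k)) / (cos (θ i) - cos (θ k)))
    (T : MvPolynomial (Fin 3) ℝ) (hT : T.totalDegree ≤ 2 * m - 1) :
    (∫ ϑ in (0 : ℝ)..π,
      (∫ φ in (0 : ℝ)..(2 * π),
        MvPolynomial.eval ![sin ϑ * cos φ, sin ϑ * sin φ, cos ϑ] T * sin ϑ))
    = π / m * ∑ i ∈ Icc 1 m, lam i * ∑ j ∈ Finset.range (2 * m),
        MvPolynomial.eval
          ![sin (θ i) * cos ((2 * j) * π / (2 * m)),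
            sin (θ i) * sin ((2 * j) * π / (2 * m)), cos (θ i)] T
      + π / m * ∑ i ∈ Icc (m + 1) (2 * m), lam i * ∑ j ∈ Finset.range (2 * m),
          MvPolynomial.eval
            ![sin (θ i) * cos ((2 * j + 1) * π / (2 * m)),
              sin (θ i) * sin ((2 * j + 1) * π / (2 * m)), cos (θ i)] T :=
  statement8_general m hm θ hθ hinj lam hlam T hT
end

section
/- Let r and s be integers with r > s > 0, and for 0 ≤ k ≤ s−1, 0 ≤ j ≤ r−s define a_{k,j} = C(r−s, j) · ∏_{i=0}^{j}(2k+2i+1) · ∏_{i=j}^{r−s}(2(r−k−i)−1), where C(·,·) is the binomial coefficient. Then for all integers p, q, j_p, j_q with 0 ≤ p < q ≤ s−1 and q ≤ j_q < j_p ≤ r−s+p, the strict inequality a_{p, j_q−p} · a_{q, j_p−q} > a_{p, j_p−p} · a_{q, j_q−q} holds. -/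
open Finset

private lemma prod_Icc_bot (f : ℕ → ℤ) {m N : ℕ} (h : m ≤ N) :
    ∏ i ∈ Finset.Icc m N, f i = f m * ∏ i ∈ Finset.Icc (m + 1) N, f i := by
  rw [← Finset.Ico_add_one_right_eq_Icc, ← Finset.Ico_add_one_right_eq_Icc,
    Finset.prod_eq_prod_Ico_succ_bot (by omega) f]

set_option maxHeartbeats 1000000 in
/-- With `r > s > 0` and
`a_{k,j} = C(r-s,j) ∏_{i=0}^{j}(2k+2i+1) ∏_{i=j}^{r-s}(2(r-k-i)-1)`
(empty product convention), for all `0 ≤ p < q ≤ s-1` and `q ≤ j_q < j_p ≤ r-s+p` one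
has `a_{p,j_q-p} · a_{q,j_p-q} > a_{p,j_p-p} · a_{q,j_q-q}`. -/
theorem statement10 (r s : ℕ) (hs : 0 < s) (hrs : s < r)
    (a : ℕ → ℕ → ℤ)
    (ha : ∀ k j, a k j = (Nat.choose (r - s) j : ℤ)
      * (∏ i ∈ Finset.range (j + 1), (2 * (k : ℤ) + 2 * (i : ℤ) + 1))
      * ∏ i ∈ Finset.Icc j (r - s), (2 * ((r : ℤ) - (k : ℤ) - (i : ℤ)) - 1))
    (p q jp jq : ℕ) (hpq : p < q) (hq : q ≤ s - 1)
    (hqjq : q ≤ jq) (hjqjp : jq < jp) (hjp : jp ≤ r - s + p) :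
    a p (jq - p) * a q (jp - q) > a p (jp - p) * a q (jq - q) := by
  have hqs : q < s := by omega
  have hps : p < s := by omega
  have hNcast : ((r - s : ℕ) : ℤ) = (r : ℤ) - s := by
    push_cast [Nat.cast_sub hrs.le]; ring
  -- positivity of the Icc-type products
  have hQpos : ∀ k m : ℕ, k < s →
      0 < ∏ i ∈ Finset.Icc m (r - s), (2 * ((r : ℤ) - (k : ℤ) - (i : ℤ)) - 1) := by
    intro k m hk
    apply Finset.prod_pos
    intro i hi
    rw [Finset.mem_Icc] at hi
    have h2 : (i : ℤ) ≤ (r : ℤ) - s := by rw [← hNcast]; exact_mod_cast hi.2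
    have h3 : (k : ℤ) + 1 ≤ (s : ℤ) := by exact_mod_cast hk
    linarith
  have hPpos : ∀ k m : ℕ,
      0 < ∏ i ∈ Finset.range m, (2 * (k : ℤ) + 2 * (i : ℤ) + 1) := by
    intro k m
    apply Finset.prod_pos
    intro i _
    positivity
  have apos : ∀ k j : ℕ, k < s → j ≤ r - s → 0 < a k j := by
    intro k j hk hj
    rw [ha]
    refine mul_pos (mul_pos ?_ (hPpos k (j + 1))) (hQpos k j hk)
    exact_mod_cast Nat.choose_pos hj
  -- the adjacent-step inequality
  have adjacent : ∀ j : ℕ, q ≤ j → j + 1 ≤ r - s + p →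
      a p (j - p) * a q (j + 1 - q) > a p (j + 1 - p) * a q (j - q) := by
    intro j hqj hj1
    have hpj : p ≤ j := by omega
    rw [ha, ha, ha, ha]
    rw [show j + 1 - p = (j - p) + 1 from by omega, show j + 1 - q = (j - q) + 1 from by omega]
    set m := j - p with hm
    set n := j - q with hn
    have hmn : n < m := by omega
    have hmN : m + 1 ≤ r - s := by omega
    have hnN : n + 1 ≤ r - s := by omega
    have hmc : (m : ℤ) = (j : ℤ) - p := by push_cast [hm, Nat.cast_sub hpj]; ring
    have hnc : (n : ℤ) = (j : ℤ) - q := by push_cast [hn, Nat.cast_sub hqj]; ring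
    -- split the products
    rw [Finset.prod_range_succ (fun i => 2 * (p : ℤ) + 2 * (i : ℤ) + 1) (m + 1),
      Finset.prod_range_succ (fun i => 2 * (q : ℤ) + 2 * (i : ℤ) + 1) (n + 1),
      prod_Icc_bot (fun i => 2 * ((r : ℤ) - (p : ℤ) - (i : ℤ)) - 1) (by omega : m ≤ r - s),
      prod_Icc_bot (fun i => 2 * ((r : ℤ) - (q : ℤ) - (i : ℤ)) - 1) (by omega : n ≤ r - s)]
    set A := ∏ i ∈ Finset.range (m + 1), (2 * (p : ℤ) + 2 * (i : ℤ) + 1) with hA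
    set B := ∏ i ∈ Finset.Icc (m + 1) (r - s), (2 * ((r : ℤ) - (p : ℤ) - (i : ℤ)) - 1) with hB
    set C := ∏ i ∈ Finset.range (n + 1), (2 * (q : ℤ) + 2 * (i : ℤ) + 1) with hC
    set D := ∏ i ∈ Finset.Icc (n + 1) (r - s), (2 * ((r : ℤ) - (q : ℤ) - (i : ℤ)) - 1) with hD
    have hApos : 0 < A := hPpos p (m + 1)
    have hCpos : 0 < C := hPpos q (n + 1)
    have hBpos : 0 < B := by
      apply Finset.prod_pos
      intro i hi
      rw [Finset.mem_Icc] at hi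
      have h2 : (i : ℤ) ≤ (r : ℤ) - s := by rw [← hNcast]; exact_mod_cast hi.2
      have h3 : (p : ℤ) + 1 ≤ (s : ℤ) := by exact_mod_cast hps
      linarith
    have hDpos : 0 < D := by
      apply Finset.prod_pos
      intro i hi
      rw [Finset.mem_Icc] at hi
      have h2 : (i : ℤ) ≤ (r : ℤ) - s := by rw [← hNcast]; exact_mod_cast hi.2
      have h3 : (q : ℤ) + 1 ≤ (s : ℤ) := by exact_mod_cast hqs
      linarith
    set c1 := ((Nat.choose (r - s) m : ℕ) : ℤ) with hc1
    set c2 := ((Nat.choose (r - s) (m + 1) : ℕ) : ℤ) with hc2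
    set c3 := ((Nat.choose (r - s) n : ℕ) : ℤ) with hc3
    set c4 := ((Nat.choose (r - s) (n + 1) : ℕ) : ℤ) with hc4
    have c1pos : 0 < c1 := by
      rw [hc1]; exact_mod_cast Nat.choose_pos (show m ≤ r - s by omega)
    have c3pos : 0 < c3 := by
      rw [hc3]; exact_mod_cast Nat.choose_pos (show n ≤ r - s by omega)
    have i1 : c2 * ((m : ℤ) + 1) = c1 * (((r - s : ℕ) : ℤ) - m) := by
      have h := Nat.choose_succ_right_eq (r - s) m
      zify [show m ≤ r - s by omega] at h
      rw [hc1, hc2]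
      linarith [h]
    have i2 : c4 * ((n : ℤ) + 1) = c3 * (((r - s : ℕ) : ℤ) - n) := by
      have h := Nat.choose_succ_right_eq (r - s) n
      zify [show n ≤ r - s by omega] at h
      rw [hc3, hc4]
      linarith [h]
    have key : c1 * c4 * ((n : ℤ) + 1) * ((m : ℤ) + 1) - c2 * c3 * ((m : ℤ) + 1) * ((n : ℤ) + 1)
        = c1 * c3 * ((m : ℤ) - n) * (((r - s : ℕ) : ℤ) + 1) := by
      linear_combination (c1 * ((m : ℤ) + 1)) * i2 - (c3 * ((n : ℤ) + 1)) * i1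
    have hmnZ : (0 : ℤ) < (m : ℤ) - n := by
      have : (n : ℤ) < m := by exact_mod_cast hmn
      linarith
    have hN1 : (0 : ℤ) < ((r - s : ℕ) : ℤ) + 1 := by positivity
    have hcc : c2 * c3 < c1 * c4 := by
      have h5 : c2 * c3 * (((m : ℤ) + 1) * ((n : ℤ) + 1))
          < c1 * c4 * (((m : ℤ) + 1) * ((n : ℤ) + 1)) := by
        have pos := mul_pos (mul_pos (mul_pos c1pos c3pos) hmnZ) hN1
        ring_nf at key pos ⊢
        linarith [key, pos]
      exact lt_of_mul_lt_mul_right h5 (by positivity)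
    -- final algebraic combination
    have hK : (0 : ℤ) < A * B * C * D * (2 * (j : ℤ) + 3) * (2 * (r : ℤ) - 2 * j - 1) := by
      have hjr : (j : ℤ) + 1 ≤ (r : ℤ) - 1 := by
        have : (j : ℤ) + 1 ≤ ((r - s : ℕ) : ℤ) + p := by exact_mod_cast hj1
        rw [hNcast] at this
        have hp' : (p : ℤ) + 1 ≤ (s : ℤ) := by exact_mod_cast hps
        linarith
      have : (0 : ℤ) < 2 * (r : ℤ) - 2 * j - 1 := by linarith
      positivity
    have h6 := mul_lt_mul_of_pos_right hcc hK
    push_cast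
    rw [hmc, hnc]
    ring_nf at h6 ⊢
    linarith [h6]
  -- the main induction
  have main : ∀ j : ℕ, jq + 1 ≤ j → j ≤ r - s + p →
      a p (jq - p) * a q (j - q) > a p (j - p) * a q (jq - q) := by
    intro j hj1
    induction j, hj1 using Nat.le_induction with
    | base => intro h2; exact adjacent jq hqjq (by omega)
    | succ j hj ih =>
      intro h2
      have IH := ih (by omega)
      have adj := adjacent j (by omega) (by omega)
      have P1 : 0 < a p (j - p) := apos p (j - p) hps (by omega)
      have P2 : 0 < a q (j - q) := apos q (j - q) hqs (by omega)
      have P3 : 0 < a p (jq - p) := apos p (jq - p) hps (by omega)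
      have P4 : 0 < a q (jq - q) := apos q (jq - q) hqs (by omega)
      have P5 : 0 < a p (j + 1 - p) := apos p (j + 1 - p) hps (by omega)
      have P6 : 0 < a q (j + 1 - q) := apos q (j + 1 - q) hqs (by omega)
      have h := mul_lt_mul'' adj IH (le_of_lt (mul_pos P5 P2)) (le_of_lt (mul_pos P1 P4))
      have h2' : (a p (j + 1 - p) * a q (jq - q)) * (a p (j - p) * a q (j - q))
          < (a p (jq - p) * a q (j + 1 - q)) * (a p (j - p) * a q (j - q)) := by
        ring_nf at h ⊢
        linarith [h]
      exact lt_of_mul_lt_mul_right h2' (le_of_lt (mul_pos P1 P2))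
  exact main jp (by omega) (by omega)
end
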